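/- Let P be a poset with least element 0 and Z(P)^× ≠ ∅, and let r ≥ 2. Then the reduced zero-divisor graph Γ_E(P) is a complete r-partite graph if and only if it is a complete graph with r vertices. -/

import Mathlib

/-- `L(x,y) = {z : z ≤ x ∧ z ≤ y}`, where the least element `0` of the poset is `⊥`. -/
def LSet (P : Type*) [PartialOrder P] [OrderBot P] (x y : P) : Set P := {z | z ≤ x ∧ z ≤ y}

theorem LSet_comm (P : Type*) [PartialOrder P] [OrderBot P] (x y : P) :
    LSet P x y = LSet P y x := by
  ext z; exact ⟨fun h => ⟨h.2, h.1⟩, fun h => ⟨h.2, h.1⟩⟩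

/-- The annihilator of `x`: `ann(x) = {y : L(x,y) = {0}}`. -/
def ann (P : Type*) [PartialOrder P] [OrderBot P] (x : P) : Set P := {y | LSet P x y = {⊥}}

theorem mem_ann_comm (P : Type*) [PartialOrder P] [OrderBot P] (x y : P) :
    y ∈ ann P x ↔ x ∈ ann P y := by
  simp only [ann, Set.mem_setOf_eq, LSet_comm P x y]

/-- The set `Z(P)^× = Z(P) \ {0}` of nonzero zero-divisors of `P`. -/
def ZDivX (P : Type*) [PartialOrder P] [OrderBot P] : Set P :=
  {x | x ≠ ⊥ ∧ ∃ y : P, y ≠ ⊥ ∧ LSet P x y = {⊥}}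

/-- The zero-divisor graph `Γ(P)` on `Z(P)^×`. -/
def zdGraph (P : Type*) [PartialOrder P] [OrderBot P] : SimpleGraph (ZDivX P) where
  Adj a b := (a : P) ≠ (b : P) ∧ LSet P a b = {⊥}
  symm := by
    refine ⟨?_⟩
    rintro a b ⟨h1, h2⟩
    exact ⟨fun h => h1 h.symm, by rw [LSet_comm]; exact h2⟩
  loopless := by refine ⟨?_⟩; rintro a ⟨h1, _⟩; exact h1 rfl

/-- The equivalence `x ∼ y ↔ ann(x) = ann(y)` on `Z(P)^×`. -/
def annSetoid (P : Type*) [PartialOrder P] [OrderBot P] : Setoid (ZDivX P) where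
  r a b := ann P a = ann P b
  iseqv := ⟨fun _ => rfl, Eq.symm, Eq.trans⟩

/-- The reduced zero-divisor graph `Γ_E(P)`, on equivalence classes of `Z(P)^×`. -/
def redGraph (P : Type*) [PartialOrder P] [OrderBot P] :
    SimpleGraph (Quotient (annSetoid P)) where
  Adj := Quotient.lift₂ (fun a b => LSet P (a : P) (b : P) = {⊥}) (by
    intro a b a' b' ha hb
    have ha' : ann P (a : P) = ann P (a' : P) := ha
    have hb' : ann P (b : P) = ann P (b' : P) := hb
    apply propext
    constructor
    · intro h
      have h1 : (b : P) ∈ ann P (a : P) := h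
      rw [ha', mem_ann_comm, hb', mem_ann_comm] at h1
      exact h1
    · intro h
      have h1 : (b' : P) ∈ ann P (a' : P) := h
      rw [← ha', mem_ann_comm, ← hb', mem_ann_comm] at h1
      exact h1)
  symm := by
    refine ⟨?_⟩
    intro x y
    refine Quotient.inductionOn₂ x y ?_
    intro a b h
    have h' : LSet P (a : P) (b : P) = {⊥} := h
    show LSet P (b : P) (a : P) = {⊥}
    rw [LSet_comm]; exact h'
  loopless := by
    refine ⟨?_⟩
    intro x
    refine Quotient.inductionOn x ?_
    intro a h
    have h' : LSet P (a : P) (a : P) = {⊥} := h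
    have hm : (a : P) ∈ LSet P (a : P) (a : P) := ⟨le_refl _, le_refl _⟩
    rw [h'] at hm
    exact a.2.1 hm

/-! A nonzero `z` with `L(a,z) = {0}` is itself a zero-divisor adjacent to `[a]`, so the
annihilator of `a` can be read off the neighbourhood of `[a]` in `Γ_E(P)`. Hence distinct
vertices of `Γ_E(P)` have distinct neighbourhoods. In a complete multipartite graph two vertices
of the same part have the same neighbourhood, so every part of `Γ_E(P)` is a single vertex. -/

namespace SimpleGraph

variable {V ι : Type*} {G : SimpleGraph V}

theorem injective_of_adj_iff_ne (hG : Function.Injective G.neighborSet) {f : V → ι}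
    (hf : ∀ u v, G.Adj u v ↔ f u ≠ f v) : Function.Injective f := by
  intro u v huv
  apply hG
  ext w
  simp only [mem_neighborSet, hf, huv]

theorem exists_adj_iff_ne_iff_nonempty_iso_top (hG : Function.Injective G.neighborSet) :
    (∃ f : V → ι, Function.Surjective f ∧ ∀ u v, G.Adj u v ↔ f u ≠ f v) ↔
      Nonempty (G ≃g (⊤ : SimpleGraph ι)) := by
  constructor
  · rintro ⟨f, hsurj, hf⟩
    exact ⟨⟨Equiv.ofBijective f ⟨injective_of_adj_iff_ne hG hf, hsurj⟩,
      fun {u v} => (hf u v).symm⟩⟩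
  · rintro ⟨e⟩
    exact ⟨e, e.surjective, fun u v => by rw [← e.map_adj_iff, top_adj, ne_eq, e.apply_eq_iff_eq]⟩

end SimpleGraph

section ReducedZeroDivisorGraph

variable (P : Type*) [PartialOrder P] [OrderBot P]

theorem bot_mem_ann (x : P) : ⊥ ∈ ann P x :=
  Set.eq_singleton_iff_unique_mem.2 ⟨⟨bot_le, le_rfl⟩, fun _ hz => le_bot_iff.1 hz.2⟩

variable {P}

theorem mem_ZDivX_of_mem_ann {x z : P} (hx : x ≠ ⊥) (hz : z ≠ ⊥) (hzx : z ∈ ann P x) :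
    z ∈ ZDivX P :=
  ⟨hz, x, hx, (mem_ann_comm P x z).1 hzx⟩

theorem redGraph_adj_mk {a b : ZDivX P} :
    (redGraph P).Adj ⟦a⟧ ⟦b⟧ ↔ (b : P) ∈ ann P a :=
  Iff.rfl

theorem ann_subset_of_neighborSet_subset {a b : ZDivX P}
    (h : (redGraph P).neighborSet ⟦a⟧ ⊆ (redGraph P).neighborSet ⟦b⟧) :
    ann P a ⊆ ann P b := by
  intro z hz
  obtain rfl | hz0 := eq_or_ne z ⊥
  · exact bot_mem_ann P b
  · let z' : ZDivX P := ⟨z, mem_ZDivX_of_mem_ann a.2.1 hz0 hz⟩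
    have hz' : ⟦z'⟧ ∈ (redGraph P).neighborSet ⟦a⟧ := redGraph_adj_mk.2 hz
    exact redGraph_adj_mk.1 (h hz')

theorem redGraph_neighborSet_injective : Function.Injective (redGraph P).neighborSet := by
  intro u v huv
  induction u, v using Quotient.inductionOn₂ with
  | h a b =>
    exact Quotient.sound <| (ann_subset_of_neighborSet_subset huv.le).antisymm
      (ann_subset_of_neighborSet_subset huv.ge)

end ReducedZeroDivisorGraph

theorem stmt6_general (P : Type*) [PartialOrder P] [OrderBot P]
    (r : ℕ) :
    (∃ f : Quotient (annSetoid P) → Fin r, Function.Surjective f ∧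
        ∀ u v : Quotient (annSetoid P), (redGraph P).Adj u v ↔ f u ≠ f v) ↔
      Nonempty (redGraph P ≃g (⊤ : SimpleGraph (Fin r))) :=
  SimpleGraph.exists_adj_iff_ne_iff_nonempty_iso_top redGraph_neighborSet_injective

/-- For `r ≥ 2`, `Γ_E(P)` is a complete `r`-partite graph iff it is a complete graph
with `r` vertices. -/
theorem stmt6 (P : Type*) [PartialOrder P] [OrderBot P] (hZ : (ZDivX P).Nonempty)
    (r : ℕ) (hr : 2 ≤ r) :
    (∃ f : Quotient (annSetoid P) → Fin r, Function.Surjective f ∧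
        ∀ u v : Quotient (annSetoid P), (redGraph P).Adj u v ↔ f u ≠ f v) ↔
      Nonempty (redGraph P ≃g (⊤ : SimpleGraph (Fin r))) :=
  stmt6_general P r
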